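/- There exists a constant C > 0 such that for every ε > 0, every function u : ℤ³ → ℂ with u(0) = 0 and |u(α)| ≤ ε/|α|² for all α ≠ 0, and every k ∈ ℤ³ with k ≠ 0, one has Σ_{α ∈ ℤ³, 0 < |α| ≤ 2|k|} |α|·|u(α)|·|u(k−α)| + |k|·Σ_{α ∈ ℤ³, |α| > 2|k|} |u(α)|·|u(k−α)| ≤ C·ε². -/

import Mathlib

/-- The Euclidean norm of a lattice point in `ℤ³`. -/
noncomputable def znorm (a : Fin 3 → ℤ) : ℝ := Real.sqrt (∑ i, ((a i : ℝ)) ^ 2)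

/-!
Write `K = |k|` and use `|u α| ≤ ε |α|⁻²`. For `|α| > 2K` we have `|k - α| > |α| / 2`, so the
high-frequency terms are `O(ε² |α|⁻⁴)`, and the lattice tail `∑_{|α| > 2K} |α|⁻⁴ = O(1/K)` absorbs
the factor `K`. For `|α| ≤ 2K`, either `|k - α| > K/2` and the term is `O(ε² K⁻² |α|⁻¹)` with
`∑_{|α| ≤ 2K} |α|⁻¹ = O(K²)`, or `|α| ≥ K/2` and the term is `O(ε² K⁻¹ |k - α|⁻²)` with
`∑_{0 < |β| ≤ K/2} |β|⁻² = O(K)`. The three lattice sums are estimated over the sup-norm shells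
`max_i |α i| = n`, each of which has at most `26 n²` points, using `n ≤ |α| ≤ 2n` on the shell.
-/

open Finset
open scoped ENNReal

noncomputable def latticeToEuclidean : (Fin 3 → ℤ) →+ EuclideanSpace ℝ (Fin 3) :=
  AddMonoidHom.mk' (fun a => WithLp.toLp 2 fun i => (a i : ℝ)) fun a b => by
    ext i; simp

lemma znorm_eq_norm (a : Fin 3 → ℤ) : znorm a = ‖latticeToEuclidean a‖ := by
  simp [znorm, EuclideanSpace.norm_eq, latticeToEuclidean]

lemma znorm_nonneg (a : Fin 3 → ℤ) : 0 ≤ znorm a := Real.sqrt_nonneg _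

@[simp]
lemma znorm_zero : znorm 0 = 0 := by
  simp [znorm]

lemma znorm_sub_comm (a b : Fin 3 → ℤ) : znorm (a - b) = znorm (b - a) := by
  simp only [znorm_eq_norm, map_sub, norm_sub_rev]

lemma abs_znorm_sub_znorm_le (a b : Fin 3 → ℤ) : |znorm a - znorm b| ≤ znorm (a - b) := by
  simpa only [znorm_eq_norm, map_sub] using abs_norm_sub_norm_le _ _

def supNorm (a : Fin 3 → ℤ) : ℕ := univ.sup fun i => (a i).natAbs

lemma natAbs_le_supNorm (a : Fin 3 → ℤ) (i : Fin 3) : (a i).natAbs ≤ supNorm a :=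
  le_sup (f := fun i => (a i).natAbs) (mem_univ i)

lemma supNorm_le_iff {a : Fin 3 → ℤ} {n : ℕ} : supNorm a ≤ n ↔ ∀ i, (a i).natAbs ≤ n := by
  simp [supNorm]

lemma supNorm_eq_zero {a : Fin 3 → ℤ} : supNorm a = 0 ↔ a = 0 := by
  rw [← Nat.le_zero, supNorm_le_iff, funext_iff]
  simp

lemma supNorm_le_znorm (a : Fin 3 → ℤ) : (supNorm a : ℝ) ≤ znorm a := by
  obtain ⟨i, -, hi⟩ := exists_mem_eq_sup univ univ_nonempty fun i => (a i).natAbs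
  rw [supNorm, hi, Nat.cast_natAbs, Int.cast_abs, ← Real.sqrt_sq_eq_abs]
  exact Real.sqrt_le_sqrt (single_le_sum (f := fun j => ((a j : ℝ)) ^ 2)
    (fun j _ => sq_nonneg _) (mem_univ i))

lemma znorm_le_two_mul_supNorm (a : Fin 3 → ℤ) : znorm a ≤ 2 * supNorm a := by
  refine Real.sqrt_le_iff.mpr ⟨by positivity, ?_⟩
  have h : ∀ i, ((a i : ℝ)) ^ 2 ≤ (supNorm a : ℝ) ^ 2 := fun i => by
    rw [← sq_abs, ← Int.cast_abs, ← Nat.cast_natAbs]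
    exact_mod_cast Nat.pow_le_pow_left (natAbs_le_supNorm a i) 2
  calc ∑ i, ((a i : ℝ)) ^ 2 ≤ ∑ _i : Fin 3, (supNorm a : ℝ) ^ 2 := sum_le_sum fun i _ => h i
    _ = 3 * (supNorm a : ℝ) ^ 2 := by simp
    _ ≤ (2 * supNorm a) ^ 2 := by nlinarith

lemma supNorm_pos {a : Fin 3 → ℤ} (ha : a ≠ 0) : 0 < supNorm a :=
  Nat.pos_of_ne_zero (mt supNorm_eq_zero.mp ha)

lemma znorm_pos {a : Fin 3 → ℤ} (ha : a ≠ 0) : 0 < znorm a :=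
  (Nat.cast_pos.mpr (supNorm_pos ha)).trans_le (supNorm_le_znorm a)

noncomputable def cube (n : ℕ) : Finset (Fin 3 → ℤ) := Fintype.piFinset fun _ => Icc (-(n : ℤ)) n

lemma mem_cube {n : ℕ} {a : Fin 3 → ℤ} : a ∈ cube n ↔ supNorm a ≤ n := by
  simp only [cube, Fintype.mem_piFinset, mem_Icc, supNorm_le_iff]
  exact forall_congr' fun i => by omega

lemma card_cube (n : ℕ) : #(cube n) = (2 * n + 1) ^ 3 := by
  rw [cube, Fintype.card_piFinset, prod_const, card_univ, Fintype.card_fin, Int.card_Icc]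
  congr 1
  omega

lemma encard_supNorm_preimage_le (n : ℕ) : (supNorm ⁻¹' {n + 1}).encard ≤ 26 * (n + 1) ^ 2 := by
  have hsub : supNorm ⁻¹' {n + 1} ⊆ ↑(cube (n + 1) \ cube n) := fun a ha => by
    simp_all [mem_cube]
  have hcard : #(cube (n + 1) \ cube n) ≤ 26 * (n + 1) ^ 2 := by
    rw [card_sdiff_of_subset fun a ha => by rw [mem_cube] at *; omega, card_cube, card_cube]
    have : (2 * (n + 1) + 1) ^ 3 ≤ (2 * n + 1) ^ 3 + 26 * (n + 1) ^ 2 := by ring_nf; omega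
    omega
  calc (supNorm ⁻¹' {n + 1}).encard ≤ (↑(cube (n + 1) \ cube n) : Set _).encard :=
        Set.encard_le_encard hsub
    _ ≤ 26 * (n + 1) ^ 2 := by rw [Set.encard_coe_eq_coe_finsetCard]; exact_mod_cast hcard

lemma tsum_le_tsum_supNorm_shells {P : (Fin 3 → ℤ) → Prop} (f : (Fin 3 → ℤ) → ℝ≥0∞)
    (g : ℕ → ℝ≥0∞) (hg : g 0 = 0) (hfg : ∀ a, P a → f a ≤ g (supNorm a)) :
    ∑' a : {a // P a}, f a ≤ ∑' n : ℕ, 26 * (n : ℝ≥0∞) ^ 2 * g n := by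
  calc ∑' a : {a // P a}, f a = ∑' a, {a | P a}.indicator f a := tsum_subtype {a | P a} f
    _ ≤ ∑' a, g (supNorm a) := ENNReal.tsum_le_tsum fun a =>
        Set.indicator_apply_le' (hfg a) fun _ => zero_le
    _ = ∑' n, ∑' _a : supNorm ⁻¹' {n}, g n := by
      rw [← ENNReal.tsum_fiberwise _ supNorm]
      exact tsum_congr fun n => tsum_congr fun a => congrArg g a.2
    _ ≤ ∑' n : ℕ, 26 * (n : ℝ≥0∞) ^ 2 * g n := by
      refine ENNReal.tsum_le_tsum fun n => ?_
      rw [ENNReal.tsum_set_const]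
      rcases n with _ | n
      · simp [hg]
      · gcongr
        exact_mod_cast encard_supNorm_preimage_le n

lemma ofReal_inv_znorm_pow_le {a : Fin 3 → ℤ} (ha : a ≠ 0) (p : ℕ) :
    ENNReal.ofReal (znorm a ^ p)⁻¹ ≤ ((supNorm a : ℝ≥0∞) ^ p)⁻¹ := by
  have hpos : (0 : ℝ) < supNorm a := Nat.cast_pos.mpr (supNorm_pos ha)
  rw [← ENNReal.ofReal_natCast, ← ENNReal.ofReal_pow hpos.le,
    ← ENNReal.ofReal_inv_of_pos (by positivity)]
  gcongr
  exact supNorm_le_znorm a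

lemma tsum_inv_znorm_pow_le {p : ℕ} (hp : p ≤ 2) {R : ℝ} (hR : 0 ≤ R) :
    ∑' a : {a : Fin 3 → ℤ // 0 < znorm a ∧ znorm a ≤ R}, ENNReal.ofReal (znorm a.1 ^ p)⁻¹
      ≤ ENNReal.ofReal (26 * R ^ (3 - p)) := by
  set M := ⌊R⌋₊
  set g : ℕ → ℝ≥0∞ := (Set.Icc 1 M).indicator fun n => ((n : ℝ≥0∞) ^ p)⁻¹
  have hshell : ∀ a, 0 < znorm a ∧ znorm a ≤ R →
      ENNReal.ofReal (znorm a ^ p)⁻¹ ≤ g (supNorm a) := by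
    intro a ha
    have ha0 : a ≠ 0 := by rintro rfl; simp at ha
    have hmem : supNorm a ∈ Set.Icc 1 M :=
      ⟨supNorm_pos ha0, Nat.le_floor ((supNorm_le_znorm a).trans ha.2)⟩
    simp only [g, Set.indicator_of_mem hmem]
    exact ofReal_inv_znorm_pow_le ha0 p
  have hterm : ∀ n ∈ Icc 1 M,
      26 * (n : ℝ≥0∞) ^ 2 * ((n : ℝ≥0∞) ^ p)⁻¹ ≤ 26 * (M : ℝ≥0∞) ^ (2 - p) := by
    intro n hn
    rw [mem_Icc] at hn
    have hn0 : (n : ℝ≥0∞) ^ p ≠ 0 := pow_ne_zero _ (by exact_mod_cast (by omega : n ≠ 0))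
    rw [show (n : ℝ≥0∞) ^ 2 = n ^ (2 - p) * n ^ p by rw [← pow_add, Nat.sub_add_cancel hp],
      mul_assoc, mul_assoc, ENNReal.mul_inv_cancel hn0 (by simp), mul_one]
    gcongr
    exact_mod_cast hn.2
  calc _ ≤ ∑' n : ℕ, 26 * (n : ℝ≥0∞) ^ 2 * g n :=
        tsum_le_tsum_supNorm_shells _ g (by simp [g]) hshell
    _ = ∑ n ∈ Icc 1 M, 26 * (n : ℝ≥0∞) ^ 2 * ((n : ℝ≥0∞) ^ p)⁻¹ := by
        rw [sum_eq_tsum_indicator, coe_Icc]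
        exact tsum_congr fun n =>
          (Set.indicator_mul_right _ (fun n : ℕ => 26 * (n : ℝ≥0∞) ^ 2) _).symm
    _ ≤ M * (26 * (M : ℝ≥0∞) ^ (2 - p)) := by
        simpa using sum_le_card_nsmul _ _ _ hterm
    _ = ENNReal.ofReal (26 * (M : ℝ) ^ (3 - p)) := by
        rw [ENNReal.ofReal_mul (by norm_num), ENNReal.ofReal_pow (by positivity),
          ENNReal.ofReal_natCast, ENNReal.ofReal_ofNat, show 3 - p = (2 - p) + 1 by omega, pow_succ]
        ring
    _ ≤ ENNReal.ofReal (26 * R ^ (3 - p)) := by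
        gcongr
        exact Nat.floor_le hR

lemma tsum_indicator_Ioi_inv_sq_le (m : ℕ) :
    ∑' n : ℕ, (Set.Ioi m).indicator (fun n : ℕ => ((n : ℝ≥0∞) ^ 2)⁻¹) n
      ≤ ENNReal.ofReal (2 / (m + 1)) := by
  refine ENNReal.tsum_le_of_sum_range_le fun N => ?_
  have hfilter : (range N).filter (fun n => n ∈ Set.Ioi m) = Ioo m N := by
    ext n; simp [and_comm]
  rw [sum_indicator_eq_sum_filter, hfilter]
  calc ∑ n ∈ Ioo m N, ((n : ℝ≥0∞) ^ 2)⁻¹ = ENNReal.ofReal (∑ n ∈ Ioo m N, ((n : ℝ) ^ 2)⁻¹) := by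
        rw [ENNReal.ofReal_sum_of_nonneg fun n _ => by positivity]
        refine sum_congr rfl fun n hn => ?_
        have : (0 : ℝ) < n := by exact_mod_cast (mem_Ioo.mp hn).1.trans_le' (Nat.zero_le m)
        rw [ENNReal.ofReal_inv_of_pos (by positivity), ENNReal.ofReal_pow this.le,
          ENNReal.ofReal_natCast]
    _ ≤ ENNReal.ofReal (2 / (m + 1)) := ENNReal.ofReal_le_ofReal (sum_Ioo_inv_sq_le m N)

lemma tsum_inv_znorm_pow_four_le {R : ℝ} (hR : 0 < R) :
    ∑' a : {a : Fin 3 → ℤ // R < znorm a}, ENNReal.ofReal (znorm a.1 ^ 4)⁻¹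
      ≤ ENNReal.ofReal (104 / R) := by
  set m := ⌊R / 2⌋₊
  set g : ℕ → ℝ≥0∞ := (Set.Ioi m).indicator fun n => ((n : ℝ≥0∞) ^ 4)⁻¹
  have hshell : ∀ a, R < znorm a → ENNReal.ofReal (znorm a ^ 4)⁻¹ ≤ g (supNorm a) := by
    intro a ha
    have ha0 : a ≠ 0 := by rintro rfl; simp at ha; linarith
    have hmem : supNorm a ∈ Set.Ioi m :=
      (Nat.floor_lt (by positivity)).mpr (by linarith [znorm_le_two_mul_supNorm a])
    simp only [g, Set.indicator_of_mem hmem]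
    exact ofReal_inv_znorm_pow_le ha0 4
  have hterm : ∀ n : ℕ, 26 * (n : ℝ≥0∞) ^ 2 * g n
      ≤ 26 * (Set.Ioi m).indicator (fun n : ℕ => ((n : ℝ≥0∞) ^ 2)⁻¹) n := by
    intro n
    by_cases hn : n ∈ Set.Ioi m
    · have hn0 : (n : ℝ≥0∞) ^ 2 ≠ 0 := pow_ne_zero _ (by exact_mod_cast (by grind : n ≠ 0))
      simp only [g, Set.indicator_of_mem hn]
      rw [show 4 = 2 + 2 from rfl, pow_add,
        ENNReal.mul_inv (by simp [hn0]) (by simp [hn0]), mul_assoc, ← mul_assoc _ (_⁻¹),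
        ENNReal.mul_inv_cancel hn0 (by simp), one_mul]
    · simp [g, hn]
  have hm : 2 / ((m : ℝ) + 1) ≤ 4 / R := by
    rw [div_le_div_iff₀ (by positivity) hR]
    linarith [Nat.lt_floor_add_one (R / 2)]
  calc _ ≤ ∑' n : ℕ, 26 * (n : ℝ≥0∞) ^ 2 * g n :=
        tsum_le_tsum_supNorm_shells _ g (by simp [g]) hshell
    _ ≤ 26 * ∑' n : ℕ, (Set.Ioi m).indicator (fun n : ℕ => ((n : ℝ≥0∞) ^ 2)⁻¹) n := by
        rw [← ENNReal.tsum_mul_left]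
        exact ENNReal.tsum_le_tsum hterm
    _ ≤ ENNReal.ofReal 26 * ENNReal.ofReal (4 / R) := by
        rw [ENNReal.ofReal_ofNat]
        gcongr
        exact (tsum_indicator_Ioi_inv_sq_le m).trans (ENNReal.ofReal_le_ofReal hm)
    _ = ENNReal.ofReal (104 / R) := by
        rw [← ENNReal.ofReal_mul (by norm_num)]
        ring_nf

section ConvolutionBounds

variable {E : Type*} [SeminormedAddGroup E] {u : (Fin 3 → ℤ) → E} {ε : ℝ}

lemma norm_le_div_sq_of_notMem (hu : ∀ a, ‖u a‖ ≤ ε / znorm a ^ 2) (hε : 0 ≤ ε) {r : ℝ}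
    (hr : 0 < r) {b : Fin 3 → ℤ} (hb : b ∉ {b | 0 < znorm b ∧ znorm b ≤ r}) :
    ‖u b‖ ≤ ε / r ^ 2 := by
  refine (hu b).trans ?_
  rcases (znorm_nonneg b).eq_or_lt with h | h
  · rw [← h]; simp; positivity
  · have : r < znorm b := not_le.mp fun h' => hb ⟨h, h'⟩
    gcongr

lemma ofReal_znorm_mul_norm_mul_norm_sub_le (hu : ∀ a, ‖u a‖ ≤ ε / znorm a ^ 2) (hε : 0 ≤ ε)
    {k a : Fin 3 → ℤ} (hk : k ≠ 0) (ha : 0 < znorm a) :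
    ENNReal.ofReal (znorm a * ‖u a‖ * ‖u (k - a)‖) ≤
      ENNReal.ofReal (4 * ε ^ 2 / znorm k ^ 2) * ENNReal.ofReal (znorm a)⁻¹ +
      ENNReal.ofReal (2 * ε ^ 2 / znorm k) *
        {b | 0 < znorm b ∧ znorm b ≤ znorm k / 2}.indicator
          (fun b => ENNReal.ofReal (znorm b ^ 2)⁻¹) (k - a) := by
  have hK := znorm_pos hk
  have hua : znorm a * ‖u a‖ ≤ ε * (znorm a)⁻¹ :=
    calc znorm a * ‖u a‖ ≤ znorm a * (ε / znorm a ^ 2) := by gcongr; exact hu a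
      _ = ε * (znorm a)⁻¹ := by field_simp
  by_cases hS : k - a ∈ {b | 0 < znorm b ∧ znorm b ≤ znorm k / 2}
  · have hKa : znorm k / 2 ≤ znorm a := by
      have := (abs_le.mp (abs_znorm_sub_znorm_le k (k - a))).2
      rw [sub_sub_cancel] at this
      linarith [hS.2]
    rw [Set.indicator_of_mem hS, ← ENNReal.ofReal_mul (p := 2 * ε ^ 2 / znorm k) (by positivity)]
    refine le_add_left (ENNReal.ofReal_le_ofReal ?_)
    calc znorm a * ‖u a‖ * ‖u (k - a)‖ ≤ ε * (znorm a)⁻¹ * (ε / znorm (k - a) ^ 2) :=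
          mul_le_mul hua (hu _) (norm_nonneg _) (by positivity)
      _ ≤ ε * (znorm k / 2)⁻¹ * (ε / znorm (k - a) ^ 2) := by gcongr
      _ = 2 * ε ^ 2 / znorm k * (znorm (k - a) ^ 2)⁻¹ := by ring
  · rw [Set.indicator_of_notMem hS, mul_zero, add_zero, ← ENNReal.ofReal_mul (by positivity)]
    refine ENNReal.ofReal_le_ofReal ?_
    calc znorm a * ‖u a‖ * ‖u (k - a)‖ ≤ ε * (znorm a)⁻¹ * (ε / (znorm k / 2) ^ 2) :=
          mul_le_mul hua (norm_le_div_sq_of_notMem hu hε (by positivity) hS) (norm_nonneg _)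
            (by positivity)
      _ = 4 * ε ^ 2 / znorm k ^ 2 * (znorm a)⁻¹ := by ring

lemma norm_mul_norm_sub_le (hu : ∀ a, ‖u a‖ ≤ ε / znorm a ^ 2) (hε : 0 ≤ ε) {k a : Fin 3 → ℤ}
    (ha : 2 * znorm k < znorm a) :
    ‖u a‖ * ‖u (k - a)‖ ≤ 4 * ε ^ 2 * (znorm a ^ 4)⁻¹ := by
  have hka : znorm a / 2 < znorm (k - a) := by
    have := (abs_le.mp (abs_znorm_sub_znorm_le a k)).2
    rw [znorm_sub_comm] at this
    linarith [znorm_nonneg k]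
  have ha0 : 0 < znorm a := by linarith [znorm_nonneg k]
  calc ‖u a‖ * ‖u (k - a)‖ ≤ ε / znorm a ^ 2 * (ε / (znorm a / 2) ^ 2) := by
        refine mul_le_mul (hu a) ((hu _).trans ?_) (norm_nonneg _) (by positivity)
        gcongr
    _ = 4 * ε ^ 2 * (znorm a ^ 4)⁻¹ := by field_simp; ring

lemma tsum_ofReal_norm_mul_norm_sub_le (hu : ∀ a, ‖u a‖ ≤ ε / znorm a ^ 2) (hε : 0 ≤ ε)
    {k : Fin 3 → ℤ} (hk : k ≠ 0) :
    ∑' a : {a : Fin 3 → ℤ // 2 * znorm k < znorm a}, ENNReal.ofReal (‖u a.1‖ * ‖u (k - a.1)‖)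
      ≤ ENNReal.ofReal (208 * ε ^ 2 / znorm k) := by
  have hK := znorm_pos hk
  calc _ ≤ ∑' a : {a : Fin 3 → ℤ // 2 * znorm k < znorm a},
        ENNReal.ofReal (4 * ε ^ 2) * ENNReal.ofReal (znorm a.1 ^ 4)⁻¹ :=
        ENNReal.tsum_le_tsum fun a => by
          rw [← ENNReal.ofReal_mul (by positivity)]
          exact ENNReal.ofReal_le_ofReal (norm_mul_norm_sub_le hu hε a.2)
    _ ≤ ENNReal.ofReal (4 * ε ^ 2) * ENNReal.ofReal (104 / (2 * znorm k)) := by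
        rw [ENNReal.tsum_mul_left]
        gcongr
        exact tsum_inv_znorm_pow_four_le (by positivity)
    _ = ENNReal.ofReal (208 * ε ^ 2 / znorm k) := by
        rw [← ENNReal.ofReal_mul (by positivity)]
        congr 1
        field_simp
        ring

lemma tsum_indicator_sub_le {G : Type*} [AddGroup G] (k : G) {P : G → Prop} (S : Set G)
    (f : G → ℝ≥0∞) : ∑' a : {a // P a}, S.indicator f (k - a.1) ≤ ∑' b : S, f b :=
  calc ∑' a : {a // P a}, S.indicator f (k - a.1) ≤ ∑' a, S.indicator f (k - a) :=
        ENNReal.tsum_comp_le_tsum_of_injective Subtype.val_injective fun a => S.indicator f (k - a)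
    _ = ∑' b, S.indicator f b := (Equiv.subLeft k).tsum_eq (S.indicator f)
    _ = ∑' b : S, f b := (tsum_subtype S f).symm

lemma tsum_ofReal_znorm_mul_norm_mul_norm_sub_le (hu : ∀ a, ‖u a‖ ≤ ε / znorm a ^ 2)
    (hε : 0 ≤ ε) {k : Fin 3 → ℤ} (hk : k ≠ 0) :
    ∑' a : {a : Fin 3 → ℤ // 0 < znorm a ∧ znorm a ≤ 2 * znorm k},
        ENNReal.ofReal (znorm a.1 * ‖u a.1‖ * ‖u (k - a.1)‖)
      ≤ ENNReal.ofReal (442 * ε ^ 2) := by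
  have hK := znorm_pos hk
  set S := {b : Fin 3 → ℤ | 0 < znorm b ∧ znorm b ≤ znorm k / 2}
  calc _ ≤ ∑' a : {a : Fin 3 → ℤ // 0 < znorm a ∧ znorm a ≤ 2 * znorm k},
        (ENNReal.ofReal (4 * ε ^ 2 / znorm k ^ 2) * ENNReal.ofReal (znorm a.1)⁻¹ +
          ENNReal.ofReal (2 * ε ^ 2 / znorm k) *
            S.indicator (fun b => ENNReal.ofReal (znorm b ^ 2)⁻¹) (k - a.1)) :=
        ENNReal.tsum_le_tsum fun a => ofReal_znorm_mul_norm_mul_norm_sub_le hu hε hk a.2.1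
    _ ≤ ENNReal.ofReal (4 * ε ^ 2 / znorm k ^ 2) * ENNReal.ofReal (26 * (2 * znorm k) ^ 2) +
          ENNReal.ofReal (2 * ε ^ 2 / znorm k) * ENNReal.ofReal (26 * (znorm k / 2) ^ 1) := by
        rw [ENNReal.tsum_add, ENNReal.tsum_mul_left, ENNReal.tsum_mul_left]
        gcongr
        · simpa using tsum_inv_znorm_pow_le (p := 1) (by norm_num) (by positivity : 0 ≤ 2 * znorm k)
        · exact (tsum_indicator_sub_le k S _).trans
            (tsum_inv_znorm_pow_le (p := 2) le_rfl (by positivity))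
    _ = ENNReal.ofReal (442 * ε ^ 2) := by
        rw [← ENNReal.ofReal_mul (by positivity), ← ENNReal.ofReal_mul (by positivity),
          ← ENNReal.ofReal_add (by positivity) (by positivity)]
        congr 1
        field_simp
        ring

end ConvolutionBounds

lemma summable_and_tsum_le_of_tsum_ofReal_le {ι : Type*} {f : ι → ℝ} (hf : ∀ i, 0 ≤ f i)
    {c : ℝ} (hc : 0 ≤ c) (h : ∑' i, ENNReal.ofReal (f i) ≤ ENNReal.ofReal c) :
    Summable f ∧ ∑' i, f i ≤ c := by
  have hs : Summable f :=
    (ENNReal.summable_toReal (h.trans_lt ENNReal.ofReal_lt_top).ne).congr fun i =>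
      ENNReal.toReal_ofReal (hf i)
  refine ⟨hs, (ENNReal.ofReal_le_ofReal_iff hc).mp ?_⟩
  rwa [ENNReal.ofReal_tsum_of_nonneg hf hs]

/-- There is a constant `C > 0` such that for every `ε > 0`, every `u : ℤ³ → ℂ` with
`u 0 = 0` and `|u α| ≤ ε/|α|²` for `α ≠ 0`, and every `k ≠ 0`, the nonlinear-term bound
`∑_{0 < |α| ≤ 2|k|} |α|·|u α|·|u (k−α)| + |k|·∑_{|α| > 2|k|} |u α|·|u (k−α)| ≤ C·ε²`
holds (the second sum converging). -/
theorem nonlinear_term_bound :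
    ∃ C : ℝ, 0 < C ∧
      ∀ (ε : ℝ), 0 < ε →
        ∀ (u : (Fin 3 → ℤ) → ℂ), u 0 = 0 →
          (∀ α : Fin 3 → ℤ, α ≠ 0 → ‖u α‖ ≤ ε / (znorm α) ^ 2) →
          ∀ k : Fin 3 → ℤ, k ≠ 0 →
            Summable (fun α : {a : Fin 3 → ℤ // 2 * znorm k < znorm a} =>
              ‖u α.1‖ * ‖u (k - α.1)‖) ∧
            (∑' α : {a : Fin 3 → ℤ // 0 < znorm a ∧ znorm a ≤ 2 * znorm k},
                znorm α.1 * ‖u α.1‖ * ‖u (k - α.1)‖)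
              + znorm k * (∑' α : {a : Fin 3 → ℤ // 2 * znorm k < znorm a},
                ‖u α.1‖ * ‖u (k - α.1)‖)
              ≤ C * ε ^ 2 := by
  refine ⟨650, by norm_num, fun ε hε u hu0 hu k hk => ?_⟩
  -- `ε / znorm 0 ^ 2 = 0`, so the bound at `0` says exactly `u 0 = 0`.
  have hu' : ∀ a, ‖u a‖ ≤ ε / znorm a ^ 2 := fun a => by
    rcases eq_or_ne a 0 with rfl | ha
    · simp [hu0]
    · exact hu a ha
  have hK := znorm_pos hk
  obtain ⟨-, hlow⟩ := summable_and_tsum_le_of_tsum_ofReal_le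
    (fun a => mul_nonneg (mul_nonneg (znorm_nonneg _) (norm_nonneg _)) (norm_nonneg _))
    (by positivity) (tsum_ofReal_znorm_mul_norm_mul_norm_sub_le hu' hε.le hk)
  obtain ⟨hsum, hhigh⟩ := summable_and_tsum_le_of_tsum_ofReal_le
    (fun a => by positivity) (by positivity) (tsum_ofReal_norm_mul_norm_sub_le hu' hε.le hk)
  refine ⟨hsum, ?_⟩
  have : znorm k * ∑' a : {a : Fin 3 → ℤ // 2 * znorm k < znorm a}, ‖u a.1‖ * ‖u (k - a.1)‖
      ≤ 208 * ε ^ 2 := by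
    rw [le_div_iff₀ hK] at hhigh
    linarith
  linarith
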